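/- Let X, Y be faces of 𝒜 with X ≤ Y in the facial weak order FW(𝒜,B), and let B′ be a region of 𝒜 such that B′ ≤ X in FW(𝒜,B). Then the interval [X,Y] in FW(𝒜,B) and the interval [X,Y] in FW(𝒜,B′) (the facial weak order of the same arrangement with base region B′) coincide: a face Z satisfies X ≤ Z ≤ Y in FW(𝒜,B) if and only if X ≤ Z ≤ Y in FW(𝒜,B′), and the two orders agree on this set of faces. -/

import Mathlib

open scoped RealInnerProductSpace Pointwise

variable {V : Type*} [NormedAddCommGroup V] [InnerProductSpace ℝ V] [FiniteDimensional ℝ V]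
  {ι : Type*} [Fintype ι]

/-- The (open) complement of the union of the hyperplanes with chosen normals `e i`. -/
def arrComplement (e : ι → V) : Set V := {v | ∀ i, ⟪e i, v⟫ ≠ 0}

/-- A region of the arrangement: the closure of a connected component of the complement
of the union of the hyperplanes. -/
def IsRegion (e : ι → V) (R : Set V) : Prop :=
  ∃ x ∈ arrComplement e, R = closure (connectedComponentIn (arrComplement e) x)

/-- The positive closed half-space bounded by the hyperplane with normal `e i`. -/
def posHalf (e : ι → V) (i : ι) : Set V := {v | 0 ≤ ⟪e i, v⟫}

/-- The negative closed half-space bounded by the hyperplane with normal `e i`. -/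
def negHalf (e : ι → V) (i : ι) : Set V := {v | ⟪e i, v⟫ ≤ 0}

/-- The separation set of two regions: the (indices of) hyperplanes such that the two
regions lie in opposite closed half-spaces. -/
def sepSet (e : ι → V) (R R' : Set V) : Set ι :=
  {i | (R ⊆ posHalf e i ∧ R' ⊆ negHalf e i) ∨ (R ⊆ negHalf e i ∧ R' ⊆ posHalf e i)}

/-- The order of the poset of regions `PR(𝒜,B)`. -/
def PRle (e : ι → V) (B R R' : Set V) : Prop := sepSet e B R ⊆ sepSet e B R'

/-- Strict order of the poset of regions. -/
def PRlt (e : ι → V) (B R R' : Set V) : Prop := PRle e B R R' ∧ R ≠ R'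

/-- Cover relation in the poset of regions. -/
def PRcover (e : ι → V) (B R R' : Set V) : Prop :=
  PRlt e B R R' ∧ ¬ ∃ U, IsRegion e U ∧ PRlt e B R U ∧ PRlt e B U R'

/-- A face of the arrangement: an intersection of a nonempty collection of regions. -/
def IsFace (e : ι → V) (F : Set V) : Prop :=
  ∃ Rs : Set (Set V), Rs.Nonempty ∧ (∀ R ∈ Rs, IsRegion e R) ∧ F = ⋂₀ Rs

/-- `[m, M]` is the facial interval of the face `F` in the poset of regions:
the regions containing `F` are exactly those between `m` and `M`. -/
def IsFacialInterval (e : ι → V) (B F m M : Set V) : Prop :=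
  IsRegion e m ∧ IsRegion e M ∧
    ∀ R, IsRegion e R → (F ⊆ R ↔ (PRle e B m R ∧ PRle e B R M))

/-- The facial weak order `FW(𝒜,B)`: `F ≤ G` iff `m_F ≤ m_G` and `M_F ≤ M_G`
in the poset of regions. -/
def FWle (e : ι → V) (B F G : Set V) : Prop :=
  ∃ mF MF mG MG, IsFacialInterval e B F mF MF ∧ IsFacialInterval e B G mG MG ∧
    PRle e B mF mG ∧ PRle e B MF MG

/-- Strict facial weak order. -/
def FWlt (e : ι → V) (B F G : Set V) : Prop := FWle e B F G ∧ F ≠ G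

/-- Cover relation in the facial weak order. -/
def FWcover (e : ι → V) (B F G : Set V) : Prop :=
  FWlt e B F G ∧ ¬ ∃ X, IsFace e X ∧ FWlt e B F X ∧ FWlt e B X G

/-- Two faces have the same maximal region `M` of their facial intervals. -/
def SameMax (e : ι → V) (B F G : Set V) : Prop :=
  ∃ m m' M, IsFacialInterval e B F m M ∧ IsFacialInterval e B G m' M

/-- Two faces have the same minimal region `m` of their facial intervals. -/
def SameMin (e : ι → V) (B F G : Set V) : Prop :=
  ∃ m M M', IsFacialInterval e B F m M ∧ IsFacialInterval e B G m M'

/-- The dimension of a face: the dimension of its linear span. -/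
noncomputable def fdim (F : Set V) : ℕ := Module.finrank ℝ (Submodule.span ℝ F)

open Classical in
/-- The covector (sign vector) of a face: the sign of `⟪e i, x⟫` for `x` in the
relative interior of the face. -/
noncomputable def covec (e : ι → V) (F : Set V) (i : ι) : SignType :=
  if ∀ x ∈ intrinsicInterior ℝ F, 0 < ⟪e i, x⟫ then 1
  else if ∀ x ∈ intrinsicInterior ℝ F, ⟪e i, x⟫ < 0 then -1
  else 0

/-- Composition of sign vectors. -/
def scomp (f g : ι → SignType) (i : ι) : SignType := if f i ≠ 0 then f i else g i

/-- The set of roots of the arrangement: the chosen normals and their opposites. -/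
def roots (e : ι → V) : Set V := Set.range e ∪ Set.range (fun i => -(e i))

/-- The root inversion set of a face. -/
def rootInv (e : ι → V) (F : Set V) : Set V :=
  {v ∈ roots e | ∃ x ∈ intrinsicInterior ℝ F, ⟪x, v⟫ ≤ 0}

/-- `H i` is a wall of the region `R`. -/
noncomputable def IsWall (e : ι → V) (R : Set V) (i : ι) : Prop :=
  fdim ({v : V | ⟪e i, v⟫ = 0} ∩ R) = Module.finrank ℝ V - 1

/-- A region is simplicial when the normal vectors of its walls are linearly independent. -/
def IsSimplicialRegion (e : ι → V) (R : Set V) : Prop :=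
  LinearIndependent ℝ (fun i : {i : ι // IsWall e R i} => e i.1)

/-- The arrangement is simplicial when all its regions are. -/
def IsSimplicial (e : ι → V) : Prop := ∀ R, IsRegion e R → IsSimplicialRegion e R

/-- The arrangement is essential when the intersection of all its hyperplanes is `{0}`. -/
def IsEssential (e : ι → V) : Prop := (⋂ i, {v : V | ⟪e i, v⟫ = 0}) = ({0} : Set V)

/-- The poset of regions is a lattice: any two regions have a join and a meet. -/
def PRIsLattice (e : ι → V) (B : Set V) : Prop :=
  ∀ R R', IsRegion e R → IsRegion e R' →
    (∃ J, IsRegion e J ∧ PRle e B R J ∧ PRle e B R' J ∧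
      ∀ U, IsRegion e U → PRle e B R U → PRle e B R' U → PRle e B J U) ∧
    (∃ M, IsRegion e M ∧ PRle e B M R ∧ PRle e B M R' ∧
      ∀ U, IsRegion e U → PRle e B U R → PRle e B U R' → PRle e B U M)

/-!
Write `N(R)` for the set of hyperplanes on whose negative side a region `R` lies. Regions are the
closed sign cones of points off the hyperplanes, so each lies on exactly one side of every
hyperplane and is determined by `N(R)`; hence `S(C, R) = N(R) ∆ N(C)` and
`S(B', R) = S(B, R) ∆ S(B, B')`. On the regions `R ≥ B'` of `PR(𝒜,B)`, i.e. those with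
`S(B, B') ⊆ S(B, R)`, this is `S(B, R) \ S(B, B')`, which preserves and reflects inclusion; and a
region below such a region in `PR(𝒜,B')` is again `≥ B'` in `PR(𝒜,B)`. So a face above `B'` in
`FW(𝒜,B)` has the same facial interval for both base regions, the two facial weak orders agree on
such faces, and every face between `X` and `Y` in either order is one of them.
-/

open scoped symmDiff
open Set

theorem mul_nonneg_iff_of_neg_iff_neg {a b t : ℝ} (ha : a ≠ 0) (hb : b ≠ 0)
    (hab : a < 0 ↔ b < 0) : 0 ≤ a * t ↔ 0 ≤ b * t := by
  rcases ha.lt_or_gt with ha | ha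
  · have hb := hab.1 ha
    constructor <;> intro h <;> nlinarith
  · have hb : 0 < b := hb.lt_or_gt.resolve_left (mt hab.2 ha.not_gt)
    rw [mul_nonneg_iff_of_pos_left ha, mul_nonneg_iff_of_pos_left hb]

section SymmDiff

variable {α : Type*} {s a c : Set α}

theorem symmDiff_subset_symmDiff_iff_of_subset (ha : s ⊆ a) (hc : s ⊆ c) :
    a ∆ s ⊆ c ∆ s ↔ a ⊆ c := by
  rw [symmDiff_of_ge ha, symmDiff_of_ge hc]
  refine ⟨fun h x hx => ?_, sdiff_subset_sdiff_left⟩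
  by_cases hs : x ∈ s
  · exact hc hs
  · exact (h ⟨hx, hs⟩).1

theorem subset_of_symmDiff_subset_symmDiff (h : a ∆ s ⊆ c ∆ s) (hc : s ⊆ c) : s ⊆ a := by
  intro x hs
  by_contra ha
  rcases h (mem_symmDiff.2 (Or.inr ⟨hs, ha⟩)) with ⟨_, hxs⟩ | ⟨_, hxc⟩
  · exact hxs hs
  · exact hxc (hc hs)

end SymmDiff

section

omit [FiniteDimensional ℝ V] [Fintype ι]

variable {e : ι → V}

def openCell (e : ι → V) (x : V) : Set V := {v | ∀ i, 0 < ⟪e i, x⟫ * ⟪e i, v⟫}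

def closedCell (e : ι → V) (x : V) : Set V := {v | ∀ i, 0 ≤ ⟪e i, x⟫ * ⟪e i, v⟫}

theorem openCell_subset_arrComplement (x : V) : openCell e x ⊆ arrComplement e :=
  fun _ hv i h0 => (hv i).ne' (by rw [h0, mul_zero])

theorem self_mem_openCell {x : V} (hx : x ∈ arrComplement e) : x ∈ openCell e x :=
  fun i => mul_self_pos.2 (hx i)

theorem convex_openCell (x : V) : Convex ℝ (openCell e x) := by
  simp only [openCell, ofPred_forall]
  refine convex_iInter fun i => convex_halfSpace_gt ⟨fun a b => ?_, fun c a => ?_⟩ 0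
  · simp only [inner_add_right, mul_add]
  · simp only [real_inner_smul_right, smul_eq_mul]; ring

theorem connectedComponentIn_arrComplement {x : V} (hx : x ∈ arrComplement e) :
    connectedComponentIn (arrComplement e) x = openCell e x := by
  refine (convex_openCell x).isPreconnected.subset_connectedComponentIn
    (self_mem_openCell hx) (openCell_subset_arrComplement x) |>.antisymm' ?_
  intro y hy i
  by_contra! hneg
  -- a sign change along the connected component would force a zero of `⟪e i, ·⟫` inside it
  obtain ⟨z, hz, hz0⟩ := isPreconnected_connectedComponentIn.intermediate_value hy
    (mem_connectedComponentIn hx) (continuous_const.mul (continuous_const.inner continuous_id)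
      |>.continuousOn) ⟨hneg, (self_mem_openCell hx i).le⟩
  exact mul_ne_zero (hx i) (connectedComponentIn_subset _ _ hz i) hz0

theorem closure_openCell {x : V} (hx : x ∈ arrComplement e) :
    closure (openCell e x) = closedCell e x := by
  refine (closure_minimal (fun v hv i => (hv i).le) ?_).antisymm fun v hv => ?_
  · simp only [closedCell, ofPred_forall]
    exact isClosed_iInter fun i =>
      isClosed_le continuous_const (continuous_const.mul (continuous_const.inner continuous_id))
  · have hseg : openSegment ℝ v x ⊆ openCell e x := by
      rintro _ ⟨a, b, ha, hb, -, rfl⟩ i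
      have hxi := self_mem_openCell hx i
      rw [inner_add_right, real_inner_smul_right, real_inner_smul_right]
      nlinarith [hv i]
    exact closure_mono hseg (segment_subset_closure_openSegment (left_mem_segment ℝ v x))

theorem IsRegion.exists_eq_closedCell {R : Set V} (hR : IsRegion e R) :
    ∃ x ∈ arrComplement e, R = closedCell e x := by
  obtain ⟨x, hx, rfl⟩ := hR
  exact ⟨x, hx, by rw [connectedComponentIn_arrComplement hx, closure_openCell hx]⟩

theorem closedCell_subset_negHalf_iff {x : V} (hx : x ∈ arrComplement e) (i : ι) :
    closedCell e x ⊆ negHalf e i ↔ ⟪e i, x⟫ < 0 := by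
  refine ⟨fun h => (h fun j => mul_self_nonneg _).lt_of_ne (hx i), fun hxi v hv => ?_⟩
  exact nonpos_of_mul_nonneg_right (hv i) hxi

theorem closedCell_subset_posHalf_iff {x : V} (hx : x ∈ arrComplement e) (i : ι) :
    closedCell e x ⊆ posHalf e i ↔ 0 < ⟪e i, x⟫ := by
  refine ⟨fun h => (h fun j => mul_self_nonneg _).lt_of_ne' (hx i), fun hxi v hv => ?_⟩
  exact nonneg_of_mul_nonneg_right (hv i) hxi

theorem IsRegion.subset_posHalf_iff {R : Set V} (hR : IsRegion e R) (i : ι) :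
    R ⊆ posHalf e i ↔ ¬ R ⊆ negHalf e i := by
  obtain ⟨x, hx, rfl⟩ := hR.exists_eq_closedCell
  rw [closedCell_subset_posHalf_iff hx, closedCell_subset_negHalf_iff hx, not_lt]
  exact (hx i).symm.le_iff_lt.symm

def negSet (e : ι → V) (R : Set V) : Set ι := {i | R ⊆ negHalf e i}

theorem IsRegion.eq_of_negSet_eq {R R' : Set V} (hR : IsRegion e R) (hR' : IsRegion e R')
    (h : negSet e R = negSet e R') : R = R' := by
  obtain ⟨x, hx, rfl⟩ := hR.exists_eq_closedCell
  obtain ⟨y, hy, rfl⟩ := hR'.exists_eq_closedCell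
  have hsign (i : ι) : ⟪e i, x⟫ < 0 ↔ ⟪e i, y⟫ < 0 := by
    rw [← closedCell_subset_negHalf_iff hx, ← closedCell_subset_negHalf_iff hy]
    exact Set.ext_iff.1 h i
  ext v
  exact forall_congr' fun i => mul_nonneg_iff_of_neg_iff_neg (hx i) (hy i) (hsign i)

theorem IsRegion.eq_of_subset {R R' : Set V} (hR : IsRegion e R) (hR' : IsRegion e R')
    (h : R ⊆ R') : R = R' := by
  refine hR.eq_of_negSet_eq hR' (Subset.antisymm (fun i hi => ?_) fun i hi => h.trans hi)
  by_contra hi'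
  exact (hR.subset_posHalf_iff i).1 (h.trans ((hR'.subset_posHalf_iff i).2 hi')) hi

theorem sepSet_eq_negSet_symmDiff {C R : Set V} (hC : IsRegion e C) (hR : IsRegion e R) :
    sepSet e C R = negSet e R ∆ negSet e C := by
  ext i
  have hCi := hC.subset_posHalf_iff i
  have hRi := hR.subset_posHalf_iff i
  simp only [sepSet, negSet, mem_ofPred_eq, mem_symmDiff]
  tauto

theorem sepSet_rebase {B B' R : Set V} (hB : IsRegion e B) (hB' : IsRegion e B')
    (hR : IsRegion e R) : sepSet e B' R = sepSet e B R ∆ sepSet e B B' := by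
  rw [sepSet_eq_negSet_symmDiff hB' hR, sepSet_eq_negSet_symmDiff hB hR,
    sepSet_eq_negSet_symmDiff hB hB', symmDiff_symmDiff_symmDiff_comm, symmDiff_self,
    symmDiff_bot]

theorem PRle_antisymm {C R R' : Set V} (hC : IsRegion e C) (hR : IsRegion e R)
    (hR' : IsRegion e R') (h : PRle e C R R') (h' : PRle e C R' R) : R = R' := by
  have hsep : sepSet e C R = sepSet e C R' := h.antisymm h'
  rw [sepSet_eq_negSet_symmDiff hC hR, sepSet_eq_negSet_symmDiff hC hR'] at hsep
  exact hR.eq_of_negSet_eq hR' (symmDiff_left_injective _ hsep)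

variable {B B' C F G H R R' m M : Set V}

theorem PRle_rebase_iff (hB : IsRegion e B) (hB' : IsRegion e B') (hR : IsRegion e R)
    (hR' : IsRegion e R') (hBR : PRle e B B' R) (hBR' : PRle e B B' R') :
    PRle e B' R R' ↔ PRle e B R R' := by
  rw [PRle, sepSet_rebase hB hB' hR, sepSet_rebase hB hB' hR']
  exact symmDiff_subset_symmDiff_iff_of_subset hBR hBR'

theorem PRle_of_rebase_le (hB : IsRegion e B) (hB' : IsRegion e B') (hR : IsRegion e R)
    (hR' : IsRegion e R') (h : PRle e B' R R') (hBR' : PRle e B B' R') : PRle e B B' R := by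
  rw [PRle, sepSet_rebase hB hB' hR, sepSet_rebase hB hB' hR'] at h
  exact subset_of_symmDiff_subset_symmDiff h hBR'

theorem IsFace.exists_isRegion_superset (hF : IsFace e F) : ∃ R, IsRegion e R ∧ F ⊆ R := by
  obtain ⟨Rs, ⟨R, hR⟩, hRs, rfl⟩ := hF
  exact ⟨R, hRs R hR, sInter_subset_of_mem hR⟩

theorem IsRegion.isFace (hR : IsRegion e R) : IsFace e R :=
  ⟨{R}, singleton_nonempty R, by simpa, (sInter_singleton R).symm⟩

theorem IsFacialInterval.le (hI : IsFacialInterval e C F m M) (hF : IsFace e F) :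
    PRle e C m M := by
  obtain ⟨R, hR, hFR⟩ := hF.exists_isRegion_superset
  obtain ⟨hmR, hRM⟩ := (hI.2.2 R hR).1 hFR
  exact hmR.trans hRM

theorem IsFacialInterval.subset_left (hI : IsFacialInterval e C F m M) (hF : IsFace e F) :
    F ⊆ m :=
  (hI.2.2 m hI.1).2 ⟨subset_rfl, hI.le hF⟩

theorem IsFacialInterval.subset_right (hI : IsFacialInterval e C F m M) (hF : IsFace e F) :
    F ⊆ M :=
  (hI.2.2 M hI.2.1).2 ⟨hI.le hF, subset_rfl⟩

theorem IsFacialInterval.unique {m' M' : Set V} (hC : IsRegion e C) (hF : IsFace e F)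
    (hI : IsFacialInterval e C F m M) (hI' : IsFacialInterval e C F m' M') : m = m' ∧ M = M' := by
  obtain ⟨hm'm, -⟩ := (hI'.2.2 m hI.1).1 (hI.subset_left hF)
  obtain ⟨hmm', -⟩ := (hI.2.2 m' hI'.1).1 (hI'.subset_left hF)
  obtain ⟨-, hMM'⟩ := (hI'.2.2 M hI.2.1).1 (hI.subset_right hF)
  obtain ⟨-, hM'M⟩ := (hI.2.2 M' hI'.2.1).1 (hI'.subset_right hF)
  exact ⟨PRle_antisymm hC hI.1 hI'.1 hmm' hm'm, PRle_antisymm hC hI.2.1 hI'.2.1 hMM' hM'M⟩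

theorem IsRegion.isFacialInterval_self (hC : IsRegion e C) (hR : IsRegion e R) :
    IsFacialInterval e C R R R := by
  refine ⟨hR, hR, fun U hU => ⟨fun hRU => ?_, fun ⟨hRU, hUR⟩ => ?_⟩⟩
  · rw [hR.eq_of_subset hU hRU]
    exact ⟨subset_rfl, subset_rfl⟩
  · rw [PRle_antisymm hC hR hU hRU hUR]

theorem isFacialInterval_rebase_iff (hB : IsRegion e B) (hB' : IsRegion e B')
    (hm : IsRegion e m) (hM : IsRegion e M) (hBm : PRle e B B' m) (hBM : PRle e B B' M) :
    IsFacialInterval e B' F m M ↔ IsFacialInterval e B F m M := by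
  have hbetween : ∀ R, IsRegion e R →
      (PRle e B' m R ∧ PRle e B' R M ↔ PRle e B m R ∧ PRle e B R M) := by
    intro R hR
    constructor
    · rintro ⟨hmR, hRM⟩
      have hBR := PRle_of_rebase_le hB hB' hR hM hRM hBM
      exact ⟨(PRle_rebase_iff hB hB' hm hR hBm hBR).1 hmR,
        (PRle_rebase_iff hB hB' hR hM hBR hBM).1 hRM⟩
    · rintro ⟨hmR, hRM⟩
      have hBR : PRle e B B' R := hBm.trans hmR
      exact ⟨(PRle_rebase_iff hB hB' hm hR hBm hBR).2 hmR,
        (PRle_rebase_iff hB hB' hR hM hBR hBM).2 hRM⟩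
  simp only [IsFacialInterval, hm, hM, true_and]
  exact forall₂_congr fun R hR => iff_congr Iff.rfl (hbetween R hR)

theorem FWle_iff_of_isFacialInterval {mF MF mG MG : Set V} (hC : IsRegion e C)
    (hF : IsFace e F) (hG : IsFace e G) (hIF : IsFacialInterval e C F mF MF)
    (hIG : IsFacialInterval e C G mG MG) :
    FWle e C F G ↔ PRle e C mF mG ∧ PRle e C MF MG := by
  refine ⟨fun ⟨mF', MF', mG', MG', hIF', hIG', hm, hM⟩ => ?_,
    fun h => ⟨_, _, _, _, hIF, hIG, h⟩⟩
  obtain ⟨rfl, rfl⟩ := hIF.unique hC hF hIF'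
  obtain ⟨rfl, rfl⟩ := hIG.unique hC hG hIG'
  exact ⟨hm, hM⟩

theorem FWle.trans (hC : IsRegion e C) (hG : IsFace e G) (hFG : FWle e C F G)
    (hGH : FWle e C G H) : FWle e C F H := by
  obtain ⟨mF, MF, mG, MG, hIF, hIG, hm, hM⟩ := hFG
  obtain ⟨mG', MG', mH, MH, hIG', hIH, hm', hM'⟩ := hGH
  obtain ⟨rfl, rfl⟩ := hIG.unique hC hG hIG'
  exact ⟨mF, MF, mH, MH, hIF, hIH, hm.trans hm', hM.trans hM'⟩

theorem FWle_region_iff (hB : IsRegion e B) (hB' : IsRegion e B') :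
    FWle e B B' F ↔ ∃ m M, IsFacialInterval e B F m M ∧ PRle e B B' m ∧ PRle e B B' M := by
  refine ⟨fun ⟨m₀, M₀, m, M, hI₀, hI, hm, hM⟩ => ?_,
    fun ⟨m, M, hI, hm, hM⟩ => ⟨B', B', m, M, hB.isFacialInterval_self hB', hI, hm, hM⟩⟩
  obtain ⟨rfl, rfl⟩ := (hB.isFacialInterval_self hB').unique hB hB'.isFace hI₀
  exact ⟨m, M, hI, hm, hM⟩

theorem FWle_rebase_iff (hB : IsRegion e B) (hB' : IsRegion e B') (hF : IsFace e F)
    (hG : IsFace e G) (hBF : FWle e B B' F) (hBG : FWle e B B' G) :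
    FWle e B' F G ↔ FWle e B F G := by
  obtain ⟨mF, MF, hIF, hBmF, hBMF⟩ := (FWle_region_iff hB hB').1 hBF
  obtain ⟨mG, MG, hIG, hBmG, hBMG⟩ := (FWle_region_iff hB hB').1 hBG
  have hIF' := (isFacialInterval_rebase_iff hB hB' hIF.1 hIF.2.1 hBmF hBMF).2 hIF
  have hIG' := (isFacialInterval_rebase_iff hB hB' hIG.1 hIG.2.1 hBmG hBMG).2 hIG
  rw [FWle_iff_of_isFacialInterval hB hF hG hIF hIG,
    FWle_iff_of_isFacialInterval hB' hF hG hIF' hIG',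
    PRle_rebase_iff hB hB' hIF.1 hIG.1 hBmF hBmG,
    PRle_rebase_iff hB hB' hIF.2.1 hIG.2.1 hBMF hBMG]

theorem FWle_of_rebase_le (hB : IsRegion e B) (hB' : IsRegion e B') (hG : IsFace e G)
    (hFG : FWle e B' F G) (hBG : FWle e B B' G) : FWle e B B' F := by
  obtain ⟨mG, MG, hIG, hBmG, hBMG⟩ := (FWle_region_iff hB hB').1 hBG
  have hIG' := (isFacialInterval_rebase_iff hB hB' hIG.1 hIG.2.1 hBmG hBMG).2 hIG
  obtain ⟨mF, MF, mG', MG', hIF', hIG'', hm, hM⟩ := hFG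
  obtain ⟨rfl, rfl⟩ := hIG'.unique hB' hG hIG''
  have hBmF := PRle_of_rebase_le hB hB' hIF'.1 hIG.1 hm hBmG
  have hBMF := PRle_of_rebase_le hB hB' hIF'.2.1 hIG.2.1 hM hBMG
  exact (FWle_region_iff hB hB').2
    ⟨mF, MF, (isFacialInterval_rebase_iff hB hB' hIF'.1 hIF'.2.1 hBmF hBMF).1 hIF', hBmF, hBMF⟩

end

theorem stmt16_general (e : ι → V) (B : Set V) (hB : IsRegion e B)
    (B' : Set V) (hB' : IsRegion e B')
    (X Y : Set V) (hX : IsFace e X) (hY : IsFace e Y)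
    (hXY : FWle e B X Y) (hB'X : FWle e B B' X) :
    (∀ Z, IsFace e Z →
      ((FWle e B X Z ∧ FWle e B Z Y) ↔ (FWle e B' X Z ∧ FWle e B' Z Y))) ∧
    (∀ Z W, IsFace e Z → IsFace e W →
      FWle e B X Z → FWle e B Z Y → FWle e B X W → FWle e B W Y →
      (FWle e B Z W ↔ FWle e B' Z W)) := by
  have hB'Y := hB'X.trans hB hX hXY
  have above {Z : Set V} (hXZ : FWle e B X Z) : FWle e B B' Z := hB'X.trans hB hX hXZ
  refine ⟨fun Z hZ => ⟨fun ⟨hXZ, hZY⟩ => ?_, fun ⟨hXZ, hZY⟩ => ?_⟩,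
    fun Z W hZ hW hXZ _ hXW _ => (FWle_rebase_iff hB hB' hZ hW (above hXZ) (above hXW)).symm⟩
  · have hB'Z := above hXZ
    exact ⟨(FWle_rebase_iff hB hB' hX hZ hB'X hB'Z).2 hXZ,
      (FWle_rebase_iff hB hB' hZ hY hB'Z hB'Y).2 hZY⟩
  · have hB'Z := FWle_of_rebase_le hB hB' hY hZY hB'Y
    exact ⟨(FWle_rebase_iff hB hB' hX hZ hB'X hB'Z).1 hXZ,
      (FWle_rebase_iff hB hB' hZ hY hB'Z hB'Y).1 hZY⟩

/-- An interval `[X,Y]` of the facial weak order is unchanged when the base region `B`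
is replaced by any region `B'` with `B' ≤ X`. -/
theorem stmt16 (e : ι → V) (hne : ∀ i, e i ≠ 0) (B : Set V)
    (hB : IsRegion e B) (hBpos : ∀ i, B ⊆ posHalf e i)
    (B' : Set V) (hB' : IsRegion e B')
    (X Y : Set V) (hX : IsFace e X) (hY : IsFace e Y)
    (hXY : FWle e B X Y) (hB'X : FWle e B B' X) :
    (∀ Z, IsFace e Z →
      ((FWle e B X Z ∧ FWle e B Z Y) ↔ (FWle e B' X Z ∧ FWle e B' Z Y))) ∧
    (∀ Z W, IsFace e Z → IsFace e W →
      FWle e B X Z → FWle e B Z Y → FWle e B X W → FWle e B W Y →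
      (FWle e B Z W ↔ FWle e B' Z W)) :=
  stmt16_general e B hB B' hB' X Y hX hY hXY hB'X
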